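/- arXiv:2512.13162 — 7 statements merged into one kernel-verified Lean document; each statement's English description precedes it below -/
import Mathlib

section
/- Let u and v be positive integers with u ≥ v ≥ 2. Define u_1 = ⌈u/2⌉, u_i = ⌈⌊u/2^{i−1}⌋/2⌉ for i = 2, …, v−1, and u_v = ⌊u/2^{v−1}⌋. Then for every i ∈ {1, …, v−1}, either u_i = Σ_{j=i+1}^{v} u_j or u_i = Σ_{j=i+1}^{v} u_j + 1. -/
/-!
Write `x_k = ⌊u/2^k⌋`, so that `x_{k+1} = ⌊x_k/2⌋` and the entries are `u_{k+1} = ⌈x_k/2⌉`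
for `k < v - 1` and `u_v = x_{v-1}`. Since `⌈x/2⌉ + ⌊x/2⌋ = x`, the tail sums telescope:
`u_{k+1} + ⋯ + u_v = x_k`. Hence `u_i = ⌈x_{i-1}/2⌉` and its tail sum is `x_i = ⌊x_{i-1}/2⌋`,
which differ by at most one.
-/

open Finset

lemma Nat.succ_div_two_eq_or (n : ℕ) : (n + 1) / 2 = n / 2 ∨ (n + 1) / 2 = n / 2 + 1 := by
  omega

lemma Nat.div_two_pow_succ (u k : ℕ) : u / 2 ^ (k + 1) = u / 2 ^ k / 2 := by
  rw [pow_succ, Nat.div_div_eq_div_mul]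

lemma sum_Icc_eq_div_two_pow {u n : ℕ} {f : ℕ → ℕ}
    (hf : ∀ k < n, f (k + 1) = (u / 2 ^ k + 1) / 2) (hlast : f (n + 1) = u / 2 ^ n)
    {k : ℕ} (hk : k ≤ n) : ∑ j ∈ Icc (k + 1) (n + 1), f j = u / 2 ^ k := by
  induction hk using Nat.decreasingInduction with
  | self => rw [Icc_self, sum_singleton, hlast]
  | of_succ k hk ih =>
    rw [← add_sum_Ioc_eq_sum_Icc (by omega), ← Icc_add_one_left_eq_Ioc, ih, hf k hk,
      Nat.div_two_pow_succ]
    omega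

theorem psi_tail_sum_general (u v : ℕ) (f : ℕ → ℕ)
    (h1 : f 1 = (u + 1) / 2)
    (hmid : ∀ i, 2 ≤ i → i ≤ v - 1 → f i = (u / 2 ^ (i - 1) + 1) / 2)
    (hlast : f v = u / 2 ^ (v - 1)) :
    ∀ i, 1 ≤ i → i ≤ v - 1 →
      f i = (∑ j ∈ Finset.Icc (i + 1) v, f j) ∨
      f i = (∑ j ∈ Finset.Icc (i + 1) v, f j) + 1 := by
  intro i hi hiv
  obtain ⟨k, rfl⟩ : ∃ k, i = k + 1 := ⟨i - 1, by omega⟩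
  obtain ⟨n, rfl⟩ : ∃ n, v = n + 1 := ⟨v - 1, by omega⟩
  have hf : ∀ k < n, f (k + 1) = (u / 2 ^ k + 1) / 2 := by
    rintro (_ | k) hk
    · simpa using h1
    · exact hmid (k + 2) (by omega) (by omega)
  rw [sum_Icc_eq_div_two_pow hf hlast hiv, hf k (by omega), Nat.div_two_pow_succ]
  exact Nat.succ_div_two_eq_or _

/-- Proposition (ii) on the auxiliary function Ψ(u,v): each entry equals the sum of the
later entries, or that sum plus one. -/
theorem psi_tail_sum (u v : ℕ) (hv : 2 ≤ v) (huv : v ≤ u) (f : ℕ → ℕ)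
    (h1 : f 1 = (u + 1) / 2)
    (hmid : ∀ i, 2 ≤ i → i ≤ v - 1 → f i = (u / 2 ^ (i - 1) + 1) / 2)
    (hlast : f v = u / 2 ^ (v - 1)) :
    ∀ i, 1 ≤ i → i ≤ v - 1 →
      f i = (∑ j ∈ Finset.Icc (i + 1) v, f j) ∨
      f i = (∑ j ∈ Finset.Icc (i + 1) v, f j) + 1 :=
  psi_tail_sum_general u v f h1 hmid hlast
end

section
/- Let q be a prime power and let k, n, m be integers with 1 < k < n ≤ m. Set s = max{⌊n/2^{k−1}⌋, 1}. Then there exists an [n,k]_{q^m/q} rank-metric code C whose weight spectrum is exactly WS(C) = {s, s+1, …, n}; in particular, C has precisely n − s + 1 distinct nonzero rank weights. -/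
/-- The rank weight of a vector `v ∈ L^n`, where `L/K` is a field extension:
the `K`-dimension of the `K`-span of the entries of `v`. -/
noncomputable def rankWeight (K : Type*) [Field K] {L : Type*} [Field L] [Algebra K L]
    {n : ℕ} (v : Fin n → L) : ℕ :=
  Module.finrank K (Submodule.span K (Set.range v))

/-- The weight spectrum of a rank-metric code `C ⊆ L^n`: the set of rank weights of its
nonzero codewords. -/
noncomputable def weightSpectrum (K : Type*) [Field K] {L : Type*} [Field L] [Algebra K L]
    {n : ℕ} (C : Submodule L (Fin n → L)) : Set ℕ :=
  {w | ∃ c ∈ C, c ≠ 0 ∧ rankWeight K c = w}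

/-- A rank-metric code `C ⊆ L^n` is nondegenerate if for every nonzero `x ∈ K^n` there is a
codeword `c ∈ C` with `∑ j, x j • c j ≠ 0`. -/
def IsNondegenerate (K : Type*) [Field K] {L : Type*} [Field L] [Algebra K L]
    {n : ℕ} (C : Submodule L (Fin n → L)) : Prop :=
  ∀ x : Fin n → K, x ≠ 0 → ∃ c ∈ C, (∑ j, x j • c j) ≠ 0

/-!
Choose `θ ∈ L` whose powers `1, θ, …, θ ^ (n - 1)` are `K`-linearly independent (a primitive
element of the finite extension) and cut the positions `0, …, n - 1` into `k` consecutive blocks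
`[p j, p (j + 1))`. The code is spanned by the `k` vectors carrying `θ ^ i` at the positions `i`
of one block. A codeword with a nonzero coefficient `β` on some block contains `β θ ^ i` for every
position `i` of that block, so its weight is at least the shortest block length, which we arrange
to be `p 1 = s`. Conversely, for `w ≤ p J ≤ p (J + 1) - w`, coefficient `θ ^ w` on the blocks
before block `J` and `1` on block `J` give the entries `θ ^ w, …, θ ^ (p J + w - 1), θ ^ (p J), …, θ ^ (p (J + 1) - 1)`, whose span
is that of `θ ^ w, …, θ ^ (p (J + 1) - 1)`, of dimension `p (J + 1) - w`. When each block is at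
most one longer than all earlier blocks together, these weights fill `[s, n]`; halving breakpoints
`⌊n / 2 ^ (k - j)⌋` have this property.
-/

open Module Submodule Set

theorem LinearIndepOn.finrank_span_image {K M ι : Type*} [Field K] [AddCommGroup M] [Module K M]
    {f : ι → M} {s : Set ι} (hf : LinearIndepOn K f s) (hs : s.Finite) :
    finrank K (span K (f '' s)) = s.ncard := by
  have := hs.fintype
  rw [image_eq_range, finrank_span_eq_card hf, ← Nat.card_eq_fintype_card, Nat.card_coe_set_eq]

theorem LinearIndepOn.mul_left {K L : Type*} [Field K] [Field L] [Algebra K L] {θ : L}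
    {s : Set ℕ} (hθ : LinearIndepOn K (θ ^ ·) s) {x : L} (hx : x ≠ 0) :
    LinearIndepOn K (fun e => x * θ ^ e) s :=
  hθ.map_injOn (LinearMap.mulLeft K x) (mul_right_injective₀ hx).injOn

theorem exists_linearIndepOn_pow (K L : Type*) [Field K] [Finite K] [Field L] [Algebra K L]
    [FiniteDimensional K L] : ∃ θ : L, LinearIndepOn K (θ ^ ·) (Iio (finrank K L)) := by
  let pb := Field.powerBasisOfFiniteOfSeparable K L
  refine ⟨pb.gen, ?_⟩
  have h := (linearIndependent_pow (K := K) pb.gen).comp Fin.equivSubtype.symm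
    (Equiv.injective _)
  rwa [pb.natDegree_minpoly, ← pb.finrank] at h

/-- Breakpoints `0 = p 0 < p 1 < ⋯ < p k = n` cutting the positions `0, …, n - 1` into the
blocks `[p j, p (j + 1))`: no block is shorter than the first one, and each block after the
first is at most one longer than all earlier blocks together. -/
structure IsAdmissiblePartition (p : ℕ → ℕ) (k n : ℕ) : Prop where
  monotone : Monotone p
  zero : p 0 = 0
  top : p k = n
  one_pos : 0 < p 1
  one_add_le : ∀ j < k, p 1 + p j ≤ p (j + 1)
  le_two_mul_add_one : ∀ j, 0 < j → j < k → p (j + 1) ≤ 2 * p j + 1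

section BlockCode

variable {K L : Type*} [Field K] [Field L] [Algebra K L] (θ : L) (p : ℕ → ℕ) (n : ℕ)

def blockVector (j : ℕ) : Fin n → L :=
  fun i => if p j ≤ i ∧ (i : ℕ) < p (j + 1) then θ ^ (i : ℕ) else 0

def blockCode (k : ℕ) : Submodule L (Fin n → L) :=
  span L (range fun j : Fin k => blockVector θ p n j)

def twistedPrefix (a b w : ℕ) : Fin n → L :=
  fun i => if (i : ℕ) < a then θ ^ (w + i) else if (i : ℕ) < b then θ ^ (i : ℕ) else 0

variable {θ p n}

theorem rankWeight_le_card (c : Fin n → L) : rankWeight K c ≤ n :=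
  (finrank_range_le_card (R := K) c).trans_eq (Fintype.card_fin n)

theorem ne_zero_of_rankWeight_pos {c : Fin n → L} (hc : 0 < rankWeight K c) : c ≠ 0 := by
  rintro rfl
  have : span K (range (0 : Fin n → L)) = ⊥ := span_eq_bot.2 (by rintro _ ⟨i, rfl⟩; rfl)
  rw [rankWeight, this, finrank_bot] at hc
  exact hc.false

theorem rankWeight_twistedPrefix (hθ : LinearIndepOn K (θ ^ ·) (Iio n)) {a b w : ℕ}
    (hwa : w ≤ a) (hab : a + w ≤ b) (hbn : b ≤ n) :
    rankWeight K (twistedPrefix θ n a b w) = b - w := by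
  have hspan : span K (range (twistedPrefix θ n a b w)) = span K ((θ ^ ·) '' Ico w b) := by
    apply le_antisymm
    · rw [span_le]
      rintro _ ⟨i, rfl⟩
      unfold twistedPrefix
      split_ifs
      · exact subset_span ⟨w + i, ⟨by omega, by omega⟩, rfl⟩
      · exact subset_span ⟨i, ⟨by omega, by omega⟩, rfl⟩
      · exact zero_mem _
    · refine span_mono ?_
      rintro _ ⟨e, ⟨hwe, heb⟩, rfl⟩
      by_cases he : e < a + w
      · refine ⟨⟨e - w, by omega⟩, ?_⟩
        simp only [twistedPrefix, if_pos (show e - w < a by omega)]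
        congr 1
        omega
      · refine ⟨⟨e, by omega⟩, ?_⟩
        simp [twistedPrefix, show ¬ e < a by omega, heb]
  rw [rankWeight, hspan, (hθ.mono fun e he => ?_).finrank_span_image (finite_Ico w b),
    ncard_Ico_nat]
  exact lt_of_lt_of_le he.2 hbn

end BlockCode

namespace IsAdmissiblePartition

variable {K L : Type*} [Field K] [Field L] [Algebra K L] {θ : L} {p : ℕ → ℕ} {k n : ℕ}

theorem lt_succ (hp : IsAdmissiblePartition p k n) {j : ℕ} (hj : j < k) : p j < p (j + 1) := by
  have := hp.one_add_le j hj
  have := hp.one_pos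
  omega

theorem le_top (hp : IsAdmissiblePartition p k n) {j : ℕ} (hj : j ≤ k) : p j ≤ n :=
  hp.top ▸ hp.monotone hj

theorem exists_mem_block (hp : IsAdmissiblePartition p k n) {i : ℕ} (hi : i < n) :
    ∃ j < k, p j ≤ i ∧ i < p (j + 1) := by
  have hk : k ≠ 0 := by
    rintro rfl
    have := hp.zero
    have := hp.top
    omega
  have hlast : i < p (k - 1 + 1) := by rwa [Nat.sub_add_cancel (Nat.pos_of_ne_zero hk), hp.top]
  have hex : ∃ j, i < p (j + 1) := ⟨k - 1, hlast⟩
  have hleast : ∃ j, i < p (j + 1) ∧ ∀ j' < j, ¬ i < p (j' + 1) :=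
    ⟨Nat.find hex, Nat.find_spec hex, fun _ => Nat.find_min hex⟩
  obtain ⟨j, hij, hmin⟩ := hleast
  refine ⟨j, ?_, ?_, hij⟩
  · by_contra! h
    exact hmin (k - 1) (by omega) hlast
  · cases j with
    | zero => simp [hp.zero]
    | succ j => exact not_lt.1 (hmin j j.lt_succ_self)

theorem sum_smul_blockVector_apply (hp : IsAdmissiblePartition p k n) (β : Fin k → L)
    (j : Fin k) (i : Fin n) (hji : p j ≤ i) (hij : (i : ℕ) < p (j + 1)) :
    (∑ j', β j' • blockVector θ p n j') i = β j * θ ^ (i : ℕ) := by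
  rw [Finset.sum_apply, Finset.sum_eq_single j]
  · simp [blockVector, hji, hij]
  · intro j' _ hj'
    have : ¬ (p j' ≤ i ∧ (i : ℕ) < p (j' + 1)) := by
      rcases lt_or_gt_of_ne hj' with h | h
      · have := hp.monotone (show (j' : ℕ) + 1 ≤ j from h)
        omega
      · have := hp.monotone (show (j : ℕ) + 1 ≤ j' from h)
        omega
    simp [blockVector, this]
  · simp

theorem finrank_blockCode (hp : IsAdmissiblePartition p k n)
    (hθ : LinearIndepOn K (θ ^ ·) (Iio n)) : finrank L (blockCode θ p n k) = k := by
  have hli : LinearIndependent L fun j : Fin k => blockVector θ p n j := by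
    refine Fintype.linearIndependent_iff.2 fun β hβ j => ?_
    have hjn : p j < n := (hp.lt_succ j.2).trans_le (hp.le_top j.2)
    have := congrFun hβ ⟨p j, hjn⟩
    rw [hp.sum_smul_blockVector_apply β j _ le_rfl (hp.lt_succ j.2)] at this
    exact (mul_eq_zero.1 this).resolve_right (hθ.ne_zero hjn)
  rw [blockCode, finrank_span_eq_card hli, Fintype.card_fin]

theorem le_rankWeight (hp : IsAdmissiblePartition p k n) (hθ : LinearIndepOn K (θ ^ ·) (Iio n))
    {c : Fin n → L} (hc : c ∈ blockCode θ p n k) (hc0 : c ≠ 0) : p 1 ≤ rankWeight K c := by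
  obtain ⟨β, rfl⟩ := (mem_span_range_iff_exists_fun L).1 hc
  obtain ⟨j, hj⟩ : ∃ j, β j ≠ 0 := by
    by_contra! h
    exact hc0 (by simp [h])
  have hjn := hp.le_top (show (j : ℕ) + 1 ≤ k from j.2)
  have hsub : (fun e => β j * θ ^ e) '' Ico (p j) (p (j + 1)) ⊆
      range (∑ j', β j' • blockVector θ p n j') := by
    rintro _ ⟨e, ⟨hje, hej⟩, rfl⟩
    exact ⟨⟨e, by omega⟩, hp.sum_smul_blockVector_apply β j _ hje hej⟩
  calc p 1 ≤ p (j + 1) - p j := by have := hp.one_add_le j j.2; omega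
    _ = finrank K (span K ((fun e => β j * θ ^ e) '' Ico (p j) (p (j + 1)))) := by
      rw [((hθ.mul_left hj).mono fun e he => ?_).finrank_span_image (finite_Ico _ _),
        ncard_Ico_nat]
      exact lt_of_lt_of_le he.2 hjn
    _ ≤ rankWeight K _ :=
      have := FiniteDimensional.span_of_finite K (finite_range (∑ j', β j' • blockVector θ p n j'))
      Submodule.finrank_mono (span_mono hsub)

theorem twistedPrefix_mem_blockCode (hp : IsAdmissiblePartition p k n) {J : ℕ} (hJ : J < k)
    (w : ℕ) : twistedPrefix θ n (p J) (p (J + 1)) w ∈ blockCode θ p n k := by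
  refine (mem_span_range_iff_exists_fun L).2
    ⟨fun j => if (j : ℕ) < J then θ ^ w else if (j : ℕ) = J then 1 else 0, funext fun i => ?_⟩
  obtain ⟨j, hjk, hji, hij⟩ := hp.exists_mem_block i.2
  rw [hp.sum_smul_blockVector_apply _ ⟨j, hjk⟩ i hji hij]
  rcases lt_trichotomy j J with h | rfl | h
  · simp [twistedPrefix, hij.trans_le (hp.monotone h), h, pow_add]
  · simp [twistedPrefix, hji.not_gt, hij]
  · have hJi := (hp.monotone h).trans hji
    simp [twistedPrefix, h.not_gt, h.ne', hJi.not_gt, (hp.monotone J.le_succ |>.trans hJi).not_gt]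

theorem exists_twist_of_mem_Icc (hp : IsAdmissiblePartition p k n) {t : ℕ} (ht : t ∈ Icc (p 1) n) :
    ∃ J < k, ∃ w ≤ p J, p J + w ≤ p (J + 1) ∧ p (J + 1) = t + w := by
  have := hp.one_pos
  obtain ⟨ht1, htn⟩ := ht
  obtain ⟨J, hJk, hJt, htJ⟩ := hp.exists_mem_block (show t - 1 < n by omega)
  refine ⟨J, hJk, p (J + 1) - t, ?_⟩
  cases J with
  | zero =>
    simp only [zero_add, hp.zero] at htJ ⊢
    omega
  | succ J =>
    have := hp.le_two_mul_add_one (J + 1) J.succ_pos hJk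
    omega

theorem weightSpectrum_blockCode (hp : IsAdmissiblePartition p k n)
    (hθ : LinearIndepOn K (θ ^ ·) (Iio n)) :
    weightSpectrum K (blockCode θ p n k) = Icc (p 1) n := by
  ext t
  constructor
  · rintro ⟨c, hc, hc0, rfl⟩
    exact ⟨hp.le_rankWeight hθ hc hc0, rankWeight_le_card (K := K) c⟩
  · intro ht
    obtain ⟨J, hJ, w, hwJ, hJw, hJt⟩ := hp.exists_twist_of_mem_Icc ht
    have hweight : rankWeight K (twistedPrefix θ n (p J) (p (J + 1)) w) = t := by
      rw [rankWeight_twistedPrefix hθ hwJ hJw (hp.le_top hJ), hJt, Nat.add_sub_cancel]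
    exact ⟨_, hp.twistedPrefix_mem_blockCode hJ w,
      ne_zero_of_rankWeight_pos (hweight ▸ hp.one_pos.trans_le ht.1), hweight⟩

end IsAdmissiblePartition

-- The floor `j * s` only matters when `n < 2 ^ k`, where plain halving would leave empty blocks.
def halvingPartition (n k j : ℕ) : ℕ :=
  if j = 0 then 0 else max (n / 2 ^ (k - j)) (j * max (n / 2 ^ (k - 1)) 1)

theorem halvingPartition_one (n k : ℕ) :
    halvingPartition n k 1 = max (n / 2 ^ (k - 1)) 1 := by
  simp [halvingPartition]

theorem monotone_halvingPartition (n k : ℕ) : Monotone (halvingPartition n k) := by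
  intro a b hab
  unfold halvingPartition
  split_ifs
  · exact le_rfl
  · exact Nat.zero_le _
  · omega
  · exact max_le_max (Nat.div_le_div_left (Nat.pow_le_pow_right two_pos (by omega))
      (by positivity)) (Nat.mul_le_mul_right _ hab)

theorem mul_max_div_two_pow_le {n k : ℕ} (hkn : k ≤ n) : k * max (n / 2 ^ (k - 1)) 1 ≤ n := by
  rcases max_cases (n / 2 ^ (k - 1)) 1 with ⟨h, -⟩ | ⟨h, -⟩
  · have hk : k ≤ 2 ^ (k - 1) := by have := Nat.lt_two_pow_self (n := k - 1); omega
    calc k * max (n / 2 ^ (k - 1)) 1 ≤ 2 ^ (k - 1) * (n / 2 ^ (k - 1)) := by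
          rw [h]; exact Nat.mul_le_mul_right _ hk
      _ ≤ n := Nat.mul_div_le n _
  · rwa [h, mul_one]

theorem isAdmissiblePartition_halvingPartition {n k : ℕ} (hk : 0 < k) (hkn : k ≤ n) :
    IsAdmissiblePartition (halvingPartition n k) k n := by
  set s := max (n / 2 ^ (k - 1)) 1 with hs
  have hdiv (j : ℕ) (hj : j < k) : n / 2 ^ (k - j) = n / 2 ^ (k - (j + 1)) / 2 := by
    rw [Nat.div_div_eq_div_mul, ← pow_succ]
    congr 2
    omega
  refine ⟨monotone_halvingPartition n k, rfl, ?_, ?_, fun j hj => ?_, fun j hj0 hjk => ?_⟩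
  · simpa [halvingPartition, hk.ne'] using mul_max_div_two_pow_le hkn
  · rw [halvingPartition_one]
    exact lt_max_of_lt_right one_pos
  · rw [halvingPartition_one, ← hs]
    rcases Nat.eq_zero_or_pos j with rfl | hj0
    · simp [halvingPartition, ← hs]
    · have hd := hdiv j hj
      have hjs : s ≤ j * s := Nat.le_mul_of_pos_left s hj0
      simp only [halvingPartition, hj0.ne', j.succ_ne_zero, if_false, add_mul, one_mul, ← hs]
      omega
  · have hd := hdiv j hjk
    have hjs : s ≤ j * s := Nat.le_mul_of_pos_left s hj0
    simp only [halvingPartition, hj0.ne', j.succ_ne_zero, if_false, add_mul, one_mul, ← hs]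
    omega

theorem exists_code_weightSpectrum_Icc_of_le_general (m n k : ℕ)
    (hk : 1 < k) (hkn : k < n) (hnm : n ≤ m)
    (K L : Type) [Field K] [Fintype K] [Field L] [Algebra K L]
    (hdeg : Module.finrank K L = m) :
    ∃ C : Submodule L (Fin n → L), Module.finrank L C = k ∧
      weightSpectrum K C = Set.Icc (max (n / 2 ^ (k - 1)) 1) n ∧
      (weightSpectrum K C).ncard = n - max (n / 2 ^ (k - 1)) 1 + 1 := by
  have : FiniteDimensional K L := Module.finite_of_finrank_pos (by omega)
  obtain ⟨θ, hθ⟩ := exists_linearIndepOn_pow K L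
  have hθn : LinearIndepOn K (θ ^ ·) (Iio n) := hθ.mono (Iio_subset_Iio (hdeg ▸ hnm))
  have hp := isAdmissiblePartition_halvingPartition (by omega : 0 < k) hkn.le
  have hspec := hp.weightSpectrum_blockCode hθn
  rw [halvingPartition_one] at hspec
  refine ⟨blockCode θ (halvingPartition n k) n k, hp.finrank_blockCode hθn, hspec, ?_⟩
  have := Nat.div_le_self n (2 ^ (k - 1))
  rw [hspec, ncard_Icc_nat]
  omega

/-- Theorem (construction, case n ≤ m): there exists an [n,k]_{q^m/q} code whose weight
spectrum is exactly {s, s+1, …, n}, where s = max{⌊n/2^{k−1}⌋, 1}. -/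
theorem exists_code_weightSpectrum_Icc_of_le (q m n k : ℕ) (hq : IsPrimePow q)
    (hk : 1 < k) (hkn : k < n) (hnm : n ≤ m)
    (K L : Type) [Field K] [Fintype K] [Field L] [Algebra K L]
    (hcard : Fintype.card K = q) (hdeg : Module.finrank K L = m) :
    ∃ C : Submodule L (Fin n → L), Module.finrank L C = k ∧
      weightSpectrum K C = Set.Icc (max (n / 2 ^ (k - 1)) 1) n ∧
      (weightSpectrum K C).ncard = n - max (n / 2 ^ (k - 1)) 1 + 1 :=
  exists_code_weightSpectrum_Icc_of_le_general m n k hk hkn hnm K L hdeg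
end

section
/- Let q be a prime power and let k, n, m be integers with 1 < k < n ≤ m. Set s = max{⌊n/2^{k−1}⌋, 1}. Then every [n,k]_{q^m/q} rank-metric code C satisfies |WS(C)| ≤ n − s + 1, i.e., C has at most n − s + 1 distinct nonzero rank weights. -/
/-!
Read a codeword `c ∈ L^n` as the `K`-linear map `K^n → L`, `x ↦ ∑ xⱼ cⱼ`; its rank is the rank
weight of `c`. Pick a nonzero codeword `φ₀` of minimal rank `d₀` and restrict the whole code to
`ker φ₀`: the code dimension drops, since `φ₀` restricts to zero, while every other codeword loses
at most `d₀` of its rank, and restricts to zero only if its rank is exactly `d₀`. Iterating, every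
rank weight lies in one of at most `k` intervals `[max_{i ≤ j} dᵢ, d₀ + ⋯ + dⱼ]` with
`d₀ + d₁ + ⋯ ≤ n`. Each new interval at most doubles the covered range beyond the integers it
leaves out, so at least `⌊n / 2^{k-1}⌋ - 1` integers of `[1, n]` are not rank weights.
-/

open Module Finset

def prefixIntervals (T : ℕ) (d : ℕ → ℕ) : Finset ℕ :=
  (range T).biUnion fun j => Icc ((range (j + 1)).sup d) (∑ i ∈ range (j + 1), d i)

section PrefixIntervals

variable {T r : ℕ} {d : ℕ → ℕ}

theorem mem_prefixIntervals :
    r ∈ prefixIntervals T d ↔ ∃ j < T, (∀ i ≤ j, d i ≤ r) ∧ r ≤ ∑ i ∈ range (j + 1), d i := by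
  simp [prefixIntervals]

theorem self_mem_prefixIntervals_cons (d₀ : ℕ) :
    d₀ ∈ prefixIntervals (T + 1) fun | 0 => d₀ | j + 1 => d j :=
  mem_prefixIntervals.2 ⟨0, T.succ_pos, fun i hi => by rw [Nat.le_zero.1 hi], by simp⟩

theorem mem_prefixIntervals_cons {d₀ r' : ℕ} (hr' : r' ∈ prefixIntervals T d) (h₀ : d₀ ≤ r)
    (hr'r : r' ≤ r) (hr : r ≤ r' + d₀) :
    r ∈ prefixIntervals (T + 1) fun | 0 => d₀ | j + 1 => d j := by
  obtain ⟨j, hj, hlow, hup⟩ := mem_prefixIntervals.1 hr'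
  refine mem_prefixIntervals.2 ⟨j + 1, by omega, fun i hi => ?_, ?_⟩
  · rcases i with _ | i
    · exact h₀
    · exact (hlow i (by omega)).trans hr'r
  · rw [sum_range_succ']
    exact hr.trans (by simpa using hup)

/-- `G` bounds from below the number of integers of `[1, d₀ + ⋯ + d_T]` missed by the intervals.
Appending `[M, D + d]` after reaching `D` skips `g = M - (D + 1)` more integers, and `d ≤ M` gives
`D + d + 1 ≤ 2 (D + 1) + g`. -/
theorem exists_card_prefixIntervals_add_le (T : ℕ) (hd : ∀ j ≤ T, 1 ≤ d j) :
    ∃ G, #(prefixIntervals (T + 1) d) + G ≤ ∑ i ∈ range (T + 1), d i ∧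
      ∑ i ∈ range (T + 1), d i + 1 ≤ 2 ^ T * (G + 2) := by
  induction T with
  | zero =>
    have := hd 0 le_rfl
    refine ⟨d 0 - 1, ?_, ?_⟩ <;> simp [prefixIntervals] <;> omega
  | succ T ih =>
    obtain ⟨G, hcard, hgap⟩ := ih fun j hj => hd j (by omega)
    set A := prefixIntervals (T + 1) d
    set D := ∑ i ∈ range (T + 1), d i
    set M := (range (T + 2)).sup d
    have hdM : d (T + 1) ≤ M := le_sup (self_mem_range_succ _)
    have hMD : M ≤ D + d (T + 1) :=
      Finset.sup_le fun i hi => (single_le_sum (fun _ _ => Nat.zero_le _) hi).trans_eq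
        (sum_range_succ d (T + 1))
    have hunion : prefixIntervals (T + 2) d = Icc M (D + d (T + 1)) ∪ A := by
      rw [prefixIntervals, range_add_one, biUnion_insert, ← sum_range_succ]
      rfl
    have hnew : Icc M (D + d (T + 1)) \ A ⊆ Icc (max M (D + 1)) (D + d (T + 1)) := by
      intro x hx
      obtain ⟨hxI, hxA⟩ := mem_sdiff.1 hx
      rw [mem_Icc] at hxI ⊢
      refine ⟨max_le hxI.1 (not_le.1 fun hxD => hxA (mem_prefixIntervals.2 ⟨T, by omega,
        fun i hi => (le_sup (mem_range.2 (by omega)) : d i ≤ M).trans hxI.1, hxD⟩)), hxI.2⟩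
    have hcard' := card_sdiff_add_card (Icc M (D + d (T + 1))) A
    have hnew' := (card_le_card hnew).trans_eq (Nat.card_Icc _ _)
    refine ⟨G + (M - (D + 1)), ?_, ?_⟩
    · rw [hunion, sum_range_succ]
      omega
    · have hg : M - (D + 1) ≤ 2 ^ T * 2 * (M - (D + 1)) := Nat.le_mul_of_pos_left _ (by positivity)
      have hpow : 2 ^ (T + 1) * (G + (M - (D + 1)) + 2) =
          2 * (2 ^ T * (G + 2)) + 2 ^ T * 2 * (M - (D + 1)) := by ring
      rw [sum_range_succ, hpow]
      omega

theorem card_prefixIntervals_le {n : ℕ} (hd : ∀ j < T, 1 ≤ d j) (hsum : ∑ j ∈ range T, d j ≤ n) :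
    #(prefixIntervals T d) ≤ n - max (n / 2 ^ (T - 1)) 1 + 1 := by
  rcases T with _ | T
  · simp [prefixIntervals]
  obtain ⟨G, hcard, hgap⟩ := exists_card_prefixIntervals_add_le T fun j hj => hd j (by omega)
  rw [Nat.add_sub_cancel]
  rcases le_or_gt (max (n / 2 ^ T) 1) (G + 1) with hG | hG
  · omega
  · have hs : 2 ^ T * (n / 2 ^ T) ≤ n := Nat.mul_div_le n _
    have hGs : G + 2 ≤ n / 2 ^ T := by omega
    have hmul : 2 ^ T * (G + 2) + n / 2 ^ T ≤ 2 ^ T * (n / 2 ^ T) + (G + 2) := by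
      nlinarith [Nat.one_le_two_pow (n := T)]
    omega

end PrefixIntervals

section Rank

variable {K V W : Type*} [Field K] [AddCommGroup V] [Module K V] [AddCommGroup W] [Module K W]

theorem finrank_range_add_finrank_le_finrank_range_comp_subtype_add [FiniteDimensional K V]
    (f : V →ₗ[K] W) (U : Submodule K V) :
    finrank K f.range + finrank K U ≤ finrank K (f ∘ₗ U.subtype).range + finrank K V := by
  have hf := f.finrank_range_add_finrank_ker
  have hfU := (f ∘ₗ U.subtype).finrank_range_add_finrank_ker
  have hker : finrank K (f ∘ₗ U.subtype).ker ≤ finrank K f.ker := by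
    rw [← Submodule.finrank_map_subtype_eq]
    exact Submodule.finrank_mono fun x ⟨y, hy, hyx⟩ => hyx ▸ hy
  omega

theorem Submodule.finrank_map_lt_of_mem_ker {f : V →ₗ[K] W} {p : Submodule K V}
    [FiniteDimensional K p] {x : V} (hx : x ∈ p) (hx₀ : x ≠ 0) (hfx : f x = 0) :
    finrank K (p.map f) < finrank K p := by
  have h := (f ∘ₗ p.subtype).finrank_range_add_finrank_ker
  rw [LinearMap.range_comp, Submodule.range_subtype] at h
  have hker : (f ∘ₗ p.subtype).ker ≠ ⊥ := fun hbot =>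
    hx₀ (congrArg Subtype.val (LinearMap.ker_eq_bot'.1 hbot ⟨x, hx⟩ hfx))
  have := Submodule.one_le_finrank_iff.2 hker
  omega

end Rank

section RankCover

variable {K L : Type*} [Field K] [Field L] [Algebra K L]

theorem exists_prefixIntervals_cover (t : ℕ) (V : Type*) [AddCommGroup V] [Module K V]
    [FiniteDimensional K V] (𝒞 : Submodule L (V →ₗ[K] L)) (h𝒞 : finrank L 𝒞 ≤ t) :
    ∃ T d, T ≤ t ∧ (∀ j < T, 1 ≤ d j) ∧ ∑ j ∈ range T, d j ≤ finrank K V ∧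
      ∀ φ ∈ 𝒞, φ ≠ 0 → finrank K φ.range ∈ prefixIntervals T d := by
  induction t generalizing V with
  | zero =>
    obtain rfl : 𝒞 = ⊥ := Submodule.finrank_eq_zero.1 (Nat.le_zero.1 h𝒞)
    exact ⟨0, fun _ => 1, le_rfl, by simp, by simp,
      fun φ hφ hφne => absurd ((Submodule.mem_bot L).1 hφ) hφne⟩
  | succ t ih =>
    rcases eq_or_ne 𝒞 ⊥ with rfl | hne
    · exact ⟨0, fun _ => 1, by omega, by simp, by simp,
        fun φ hφ hφne => absurd ((Submodule.mem_bot L).1 hφ) hφne⟩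
    obtain ⟨φ₀, ⟨hφ₀, hφ₀ne⟩, hmin⟩ := (measure fun φ : V →ₗ[K] L => finrank K φ.range).wf.has_min
      {φ | φ ∈ 𝒞 ∧ φ ≠ 0} ((Submodule.ne_bot_iff 𝒞).1 hne)
    set U := φ₀.ker
    set d₀ := finrank K φ₀.range
    have hd₀ : 1 ≤ d₀ := Submodule.one_le_finrank_iff.2 (LinearMap.range_eq_bot.not.2 hφ₀ne)
    have hU : d₀ + finrank K U = finrank K V := φ₀.finrank_range_add_finrank_ker
    have h𝒞U : finrank L (𝒞.map (LinearMap.lcomp L L U.subtype)) ≤ t := by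
      have := Submodule.finrank_map_lt_of_mem_ker (f := LinearMap.lcomp L L U.subtype) hφ₀ hφ₀ne
        (by ext x; exact x.2)
      omega
    obtain ⟨T, d, hT, hd, hsum, hcover⟩ := ih U _ h𝒞U
    refine ⟨T + 1, fun | 0 => d₀ | j + 1 => d j, by omega, ?_, ?_, ?_⟩
    · rintro (_ | j) hj
      exacts [hd₀, hd j (by omega)]
    · rw [sum_range_succ']
      change ∑ j ∈ range T, d j + d₀ ≤ finrank K V
      omega
    · intro φ hφ hφne
      have hφ₀φ : d₀ ≤ finrank K φ.range := not_lt.1 (hmin φ ⟨hφ, hφne⟩)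
      have hrank := finrank_range_add_finrank_le_finrank_range_comp_subtype_add φ U
      by_cases hres : φ ∘ₗ U.subtype = 0
      · rw [hres, LinearMap.range_zero, finrank_bot] at hrank
        rw [show finrank K φ.range = d₀ by omega]
        exact self_mem_prefixIntervals_cons d₀
      · exact mem_prefixIntervals_cons (r' := finrank K (φ ∘ₗ U.subtype).range)
          (hcover _ (Submodule.mem_map_of_mem hφ) hres) hφ₀φ
          (Submodule.finrank_mono (LinearMap.range_comp_le_range _ _)) (by omega)

end RankCover

theorem rankWeight_eq_finrank_range_constr (K : Type*) {L : Type*} [Field K] [Field L]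
    [Algebra K L] {n : ℕ} (v : Fin n → L) :
    rankWeight K v = finrank K ((Pi.basisFun K (Fin n)).constr L v).range := by
  rw [rankWeight, Module.Basis.constr_range]

theorem weightSpectrum_ncard_le_of_le_general (n k : ℕ)
    (K L : Type) [Field K] [Field L] [Algebra K L]
    (C : Submodule L (Fin n → L)) (hdim : Module.finrank L C = k) :
    (weightSpectrum K C).ncard ≤ n - max (n / 2 ^ (k - 1)) 1 + 1 := by
  set e := (Pi.basisFun K (Fin n)).constr (M' := L) L
  obtain ⟨T, d, hT, hd, hsum, hcover⟩ := exists_prefixIntervals_cover k (Fin n → K)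
    (C.map e.toLinearMap) ((e.finrank_map_eq C).trans hdim).le
  rw [finrank_fin_fun] at hsum
  have hWS : weightSpectrum K C ⊆ prefixIntervals T d := by
    rintro _ ⟨c, hc, hc0, rfl⟩
    rw [rankWeight_eq_finrank_range_constr]
    exact hcover _ (Submodule.mem_map_of_mem hc) (e.map_ne_zero_iff.2 hc0)
  have hTk : n / 2 ^ (k - 1) ≤ n / 2 ^ (T - 1) :=
    Nat.div_le_div_left (Nat.pow_le_pow_right two_pos (by omega)) (Nat.two_pow_pos _)
  calc (weightSpectrum K C).ncard ≤ #(prefixIntervals T d) := by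
        simpa using Set.ncard_le_ncard hWS (Finset.finite_toSet _)
    _ ≤ n - max (n / 2 ^ (T - 1)) 1 + 1 := card_prefixIntervals_le hd hsum
    _ ≤ n - max (n / 2 ^ (k - 1)) 1 + 1 := by omega

/-- Theorem (upper bound, case n ≤ m): every [n,k]_{q^m/q} code has at most n − s + 1
distinct nonzero rank weights, where s = max{⌊n/2^{k−1}⌋, 1}. -/
theorem weightSpectrum_ncard_le_of_le (q m n k : ℕ) (hq : IsPrimePow q)
    (hk : 1 < k) (hkn : k < n) (hnm : n ≤ m)
    (K L : Type) [Field K] [Fintype K] [Field L] [Algebra K L]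
    (hcard : Fintype.card K = q) (hdeg : Module.finrank K L = m)
    (C : Submodule L (Fin n → L)) (hdim : Module.finrank L C = k) :
    (weightSpectrum K C).ncard ≤ n - max (n / 2 ^ (k - 1)) 1 + 1 :=
  weightSpectrum_ncard_le_of_le_general n k K L C hdim
end

section
/- Let k ≥ 1 and n be integers with n ≥ 2^k, and set s = ⌊n/2^{k−1}⌋ (so s > 1). Let S be a subset of {1, 2, …, n} with |S| ≥ n − s + 2. Then there exist k+1 elements s_0, s_1, …, s_k ∈ S such that s_j > s_0 + s_1 + ⋯ + s_{j−1} for every j with 1 ≤ j ≤ k. -/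
/-!
Choose the elements greedily: each `e j` is the least element of `S` exceeding the sum `σ` of
the previous ones. Write `c x` for the number of elements of `S` that are `≤ x` and
`d = n - |S|` for the number of gaps of `S` in `[1, n]`. Every element of `S` in `(σ, σ + e j]`
lies in `[e j, σ + e j]`, so `c (σ + e j) ≤ c σ + σ + 1`, and `σ ≤ c σ + d` because `σ < n`.
Hence `c + d + 1` at most doubles at each step, starting from `d + 2` after the first one.
As long as `2 ^ j * (d + 2) ≤ n`, i.e. for `j < k` because `d + 2 ≤ s`, this keeps `c σ < |S|`,
so there is a next element.
-/

open Finset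

def countLe (S : Finset ℕ) (x : ℕ) : ℕ := #{y ∈ S | y ≤ x}

/-- The least element of `S` above `σ` (junk value `0` if there is none). -/
noncomputable def nextAbove (S : Finset ℕ) (σ : ℕ) : ℕ := sInf {x | x ∈ S ∧ σ < x}

noncomputable def greedyPartialSum (S : Finset ℕ) : ℕ → ℕ
  | 0 => 0
  | j + 1 => greedyPartialSum S j + nextAbove S (greedyPartialSum S j)

noncomputable def greedySeq (S : Finset ℕ) (j : ℕ) : ℕ := nextAbove S (greedyPartialSum S j)

section

variable {S : Finset ℕ} {n σ : ℕ}

theorem nextAbove_spec (h : ∃ x ∈ S, σ < x) : nextAbove S σ ∈ S ∧ σ < nextAbove S σ :=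
  Nat.sInf_mem (s := {x | x ∈ S ∧ σ < x}) h

theorem nextAbove_le {x : ℕ} (hx : x ∈ S) (hσx : σ < x) : nextAbove S σ ≤ x :=
  Nat.sInf_le ⟨hx, hσx⟩

theorem sum_range_greedySeq (j : ℕ) : ∑ i ∈ range j, greedySeq S i = greedyPartialSum S j := by
  induction j with
  | zero => rfl
  | succ j ih => rw [sum_range_succ, ih, greedySeq, greedyPartialSum]

theorem countLe_zero (h0 : 0 ∉ S) : countLe S 0 = 0 := by
  simp only [countLe, card_eq_zero, filter_eq_empty_iff, nonpos_iff_eq_zero]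
  rintro x hx rfl
  exact h0 hx

theorem exists_mem_pos (h0 : 0 ∉ S) (hne : S.Nonempty) : ∃ x ∈ S, 0 < x :=
  let ⟨x, hx⟩ := hne
  ⟨x, hx, Nat.pos_of_ne_zero fun hx0 => h0 (hx0 ▸ hx)⟩

theorem exists_mem_gt_of_countLe_lt (h : countLe S σ < #S) : ∃ x ∈ S, σ < x := by
  by_contra! hle
  rw [countLe, filter_true_of_mem hle] at h
  exact h.false

theorem le_countLe_add (hS : S ⊆ Icc 1 n) (hσ : σ ≤ n) : σ ≤ countLe S σ + (n - #S) := by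
  have hsub : Icc 1 σ ⊆ {y ∈ S | y ≤ σ} ∪ (Icc 1 n \ S) := by
    intro y hy
    rw [mem_Icc] at hy
    by_cases hyS : y ∈ S
    · exact mem_union_left _ (mem_filter.mpr ⟨hyS, hy.2⟩)
    · exact mem_union_right _ (mem_sdiff.mpr ⟨mem_Icc.mpr ⟨hy.1, hy.2.trans hσ⟩, hyS⟩)
  have := (card_le_card hsub).trans (card_union_le _ _)
  rwa [card_sdiff_of_subset hS, Nat.card_Icc, Nat.card_Icc, Nat.add_sub_cancel] at this

theorem countLe_add_nextAbove_le (h : ∃ x ∈ S, σ < x) :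
    countLe S (σ + nextAbove S σ) ≤ countLe S σ + σ + 1 := by
  set e := nextAbove S σ
  have hsub : {y ∈ S | y ≤ σ + e} ⊆ {y ∈ S | y ≤ σ} ∪ Icc e (σ + e) := by
    intro y hy
    obtain ⟨hyS, hy⟩ := mem_filter.mp hy
    rcases le_or_gt y σ with hyσ | hσy
    · exact mem_union_left _ (mem_filter.mpr ⟨hyS, hyσ⟩)
    · exact mem_union_right _ (mem_Icc.mpr ⟨nextAbove_le hyS hσy, hy⟩)
  have := (card_le_card hsub).trans (card_union_le _ _)
  rw [Nat.card_Icc] at this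
  unfold countLe
  omega

theorem countLe_add_nextAbove_add_le (hS : S ⊆ Icc 1 n) (h : ∃ x ∈ S, σ < x) :
    countLe S (σ + nextAbove S σ) + (n - #S) + 1 ≤ 2 * (countLe S σ + (n - #S) + 1) := by
  obtain ⟨he, hσe⟩ := nextAbove_spec h
  have hσn : σ ≤ n := hσe.le.trans (mem_Icc.mp (hS he)).2
  have := le_countLe_add hS hσn
  have := countLe_add_nextAbove_le h
  omega

theorem countLe_greedyPartialSum_succ_add_le (hS : S ⊆ Icc 1 n) :
    ∀ j, 2 ^ j * (n - #S + 2) ≤ n →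
      countLe S (greedyPartialSum S (j + 1)) + (n - #S) + 1 ≤ 2 ^ j * (n - #S + 2) := by
  have h0 : 0 ∉ S := fun h0 => by simpa using hS h0
  intro j hj
  induction j with
  | zero =>
    have := countLe_add_nextAbove_le (exists_mem_pos h0 (card_pos.mp (by omega)))
    rw [countLe_zero h0] at this
    simp only [greedyPartialSum, zero_add, pow_zero, one_mul] at this ⊢
    omega
  | succ j ih =>
    have hj' : 2 ^ j * (n - #S + 2) ≤ n :=
      le_trans (Nat.mul_le_mul_right _ (Nat.pow_le_pow_right two_pos j.le_succ)) hj
    have ih := ih hj'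
    have habove :=
      exists_mem_gt_of_countLe_lt (S := S) (σ := greedyPartialSum S (j + 1)) (by omega)
    calc countLe S (greedyPartialSum S (j + 1 + 1)) + (n - #S) + 1
        ≤ 2 * (countLe S (greedyPartialSum S (j + 1)) + (n - #S) + 1) :=
          countLe_add_nextAbove_add_le hS habove
      _ ≤ 2 ^ (j + 1) * (n - #S + 2) := by rw [pow_succ]; linarith

theorem exists_mem_gt_greedyPartialSum {k : ℕ} (hS : S ⊆ Icc 1 n)
    (hk : 2 ^ (k - 1) * (n - #S + 2) ≤ n) : ∀ i ≤ k, ∃ x ∈ S, greedyPartialSum S i < x := by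
  rintro (_ | j) hj
  · have : n - #S + 2 ≤ n := le_trans (Nat.le_mul_of_pos_left _ (by positivity)) hk
    exact exists_mem_pos (fun h0 => by simpa using hS h0) (card_pos.mp (by omega))
  · have hj' : 2 ^ j * (n - #S + 2) ≤ n :=
      le_trans (Nat.mul_le_mul_right _ (Nat.pow_le_pow_right two_pos (by omega))) hk
    have := countLe_greedyPartialSum_succ_add_le hS j hj'
    exact exists_mem_gt_of_countLe_lt (by omega)

end

theorem exists_superincreasing_of_large_subset_general (k n s : ℕ)
    (hs : s = n / 2 ^ (k - 1))
    (S : Finset ℕ) (hS : S ⊆ Finset.Icc 1 n) (hcard : n - s + 2 ≤ S.card) :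
    ∃ e : ℕ → ℕ, (∀ i ≤ k, e i ∈ S) ∧
      ∀ j, 1 ≤ j → j ≤ k → (∑ i ∈ Finset.range j, e i) < e j := by
  have hSn : #S ≤ n := by simpa using card_le_card hS
  have hk : 2 ^ (k - 1) * (n - #S + 2) ≤ n :=
    calc 2 ^ (k - 1) * (n - #S + 2) ≤ 2 ^ (k - 1) * s := Nat.mul_le_mul_left _ (by omega)
      _ ≤ n := by rw [hs, mul_comm]; exact Nat.div_mul_le_self n _
  have habove := exists_mem_gt_greedyPartialSum hS hk
  refine ⟨greedySeq S, fun i hi => (nextAbove_spec (habove i hi)).1, fun j _ hj => ?_⟩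
  rw [sum_range_greedySeq]
  exact (nextAbove_spec (habove j hj)).2

/-- Combinatorial lemma (case n ≤ m): if n ≥ 2^k, s = ⌊n/2^{k−1}⌋, and S ⊆ {1,…,n} has at
least n − s + 2 elements, then S contains k+1 elements s_0,…,s_k with each s_j greater than
the sum of the preceding ones. -/
theorem exists_superincreasing_of_large_subset (k n s : ℕ) (hk : 1 ≤ k) (hn : 2 ^ k ≤ n)
    (hs : s = n / 2 ^ (k - 1))
    (S : Finset ℕ) (hS : S ⊆ Finset.Icc 1 n) (hcard : n - s + 2 ≤ S.card) :
    ∃ e : ℕ → ℕ, (∀ i ≤ k, e i ∈ S) ∧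
      ∀ j, 1 ≤ j → j ≤ k → (∑ i ∈ Finset.range j, e i) < e j :=
  exists_superincreasing_of_large_subset_general k n s hs S hS hcard
end

section
/- Let k, m, n be integers with m < n ≤ km, set t = ⌊(km − n)/m⌋ and a = n − (k − t − 2)m, and let h = max{⌊a/2^{t+1}⌋, 1}; assume h > 1. Let S be a subset of {1, …, m} with |S| ≥ m − h + 2. Then there exist t+2 elements s_0 < s_1 < ⋯ < s_{t+1} of S such that, for every j with 1 ≤ j ≤ t+1, both s_0 + (2^{j−1} − 1)h + 1 ≤ s_j ≤ 2^{j−1}h and s_j > s_0 + s_1 + ⋯ + s_{j−1} hold. -/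
/-!
The arithmetic hypotheses give `a ≤ 2m`, hence `2^t h ≤ m`, so for `j ≤ t` every window
`[s₀ + (2^j - 1)h + 1, 2^j h]`, with `s₀ = min S`, lies in `[1, m]` and has `h - s₀` points.
Since `S ⊆ [s₀, m]` has at least `m - h + 2` elements, it cannot avoid such a window.
Choosing `s_{j+1}` in the `j`-th window, the partial sums obey
`s₀ + ⋯ + s_j ≤ s₀ + (2^j - 1)h < s_{j+1}`, which also makes the chain increasing.
-/

open Finset

theorem sub_mul_le_two_mul {k m n t : ℕ} (hkm : n ≤ k * m) (ht : t * m ≤ k * m - n) :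
    n - (k - t - 2) * m ≤ 2 * m := by
  have hn : n ≤ (k - t) * m := by rw [Nat.sub_mul]; omega
  have : (k - t) * m ≤ (k - t - 2) * m + 2 * m := by rw [← Nat.add_mul]; gcongr; omega
  omega

theorem exists_mem_Icc_of_card_le {S : Finset ℕ} {m h c s₀ : ℕ} (hS : S ⊆ Icc 1 m)
    (hcard : m - h + 2 ≤ #S) (hs₀ : IsLeast (S : Set ℕ) s₀) (hc : c + h ≤ m) :
    ∃ x ∈ S, s₀ + c + 1 ≤ x ∧ x ≤ c + h := by
  by_contra! hgap
  have hsub : S ⊆ Icc s₀ m \ Icc (s₀ + c + 1) (c + h) := fun x hx => by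
    have := hs₀.2 hx
    have := mem_Icc.1 (hS hx)
    have := hgap x hx
    simp only [mem_sdiff, mem_Icc]
    omega
  have hI : Icc (s₀ + c + 1) (c + h) ⊆ Icc s₀ m := Icc_subset_Icc (by omega) hc
  have := card_le_card hsub
  rw [card_sdiff_of_subset hI, Nat.card_Icc, Nat.card_Icc] at this
  omega

theorem sum_range_succ_le_of_le_two_pow_mul {e : ℕ → ℕ} {h l : ℕ}
    (he : ∀ j < l, e (j + 1) ≤ 2 ^ j * h) :
    ∑ i ∈ range (l + 1), e i ≤ e 0 + (2 ^ l - 1) * h := by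
  induction l with
  | zero => simp
  | succ l ih =>
    have hpow : (2 ^ (l + 1) - 1) * h = (2 ^ l - 1) * h + 2 ^ l * h := by
      rw [← Nat.add_mul, pow_succ]; congr 1; have := Nat.one_le_two_pow (n := l); omega
    rw [sum_range_succ, hpow]
    have := ih fun j hj => he j (by omega)
    have := he l (by omega)
    omega

theorem sum_range_lt_of_doubling {e : ℕ → ℕ} {h T : ℕ}
    (he : ∀ j ≤ T, e 0 + (2 ^ j - 1) * h + 1 ≤ e (j + 1) ∧ e (j + 1) ≤ 2 ^ j * h)
    {j : ℕ} (hj : j ≤ T) : ∑ i ∈ range (j + 1), e i < e (j + 1) := by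
  have := sum_range_succ_le_of_le_two_pow_mul (l := j) fun i hi => (he i (by omega)).2
  have := (he j hj).1
  omega

theorem exists_chain_of_large_subset_general (k m n t a h : ℕ) (hkm : n ≤ k * m)
    (ht : t = (k * m - n) / m) (ha : a = n - (k - t - 2) * m)
    (hh : h = max (a / 2 ^ (t + 1)) 1) (hh1 : 1 < h)
    (S : Finset ℕ) (hS : S ⊆ Finset.Icc 1 m) (hcard : m - h + 2 ≤ S.card) :
    ∃ e : ℕ → ℕ, (∀ i ≤ t + 1, e i ∈ S) ∧
      (∀ i j, i < j → j ≤ t + 1 → e i < e j) ∧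
      (∀ j, 1 ≤ j → j ≤ t + 1 →
        e 0 + (2 ^ (j - 1) - 1) * h + 1 ≤ e j ∧ e j ≤ 2 ^ (j - 1) * h ∧
        (∑ i ∈ Finset.range j, e i) < e j) := by
  have ha_le : a ≤ 2 * m := ha ▸ sub_mul_le_two_mul hkm (ht ▸ Nat.div_mul_le_self _ _)
  have hh_le : 2 ^ (t + 1) * h ≤ a := by
    rw [hh, max_eq_left (by omega)]
    exact Nat.mul_div_le a _
  have hsplit : ∀ j, (2 ^ j - 1) * h + h = 2 ^ j * h := fun j => by
    rw [Nat.sub_one_mul, Nat.sub_add_cancel (Nat.le_mul_of_pos_left h (by positivity))]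
  have hfits : ∀ j ≤ t, (2 ^ j - 1) * h + h ≤ m := fun j hj => calc
    _ = 2 ^ j * h := hsplit j
    _ ≤ 2 ^ t * h := by gcongr; omega
    _ ≤ m := by rw [pow_succ] at hh_le; linarith
  obtain ⟨s₀, hs₀⟩ : ∃ s, IsLeast (S : Set ℕ) s := ⟨_, S.isLeast_min' (card_pos.1 (by omega))⟩
  choose! f hfS hf using fun j (hj : j ≤ t) =>
    exists_mem_Icc_of_card_le hS hcard hs₀ (hfits j hj)
  set e : ℕ → ℕ := fun i => if i = 0 then s₀ else f (i - 1)
  have he : ∀ j ≤ t, e 0 + (2 ^ j - 1) * h + 1 ≤ e (j + 1) ∧ e (j + 1) ≤ 2 ^ j * h :=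
    fun j hj => by
      simpa only [e, if_pos, Nat.add_one_ne_zero, if_false, Nat.add_sub_cancel, hsplit]
        using hf j hj
  refine ⟨e, ?_, ?_, ?_⟩
  · rintro (_ | i) hi
    · exact hs₀.1
    · exact hfS i (by omega)
  · intro i j hij hj
    obtain ⟨j, rfl⟩ : ∃ j', j = j' + 1 := ⟨j - 1, by omega⟩
    exact (single_le_sum (fun _ _ => Nat.zero_le _) (mem_range.2 hij)).trans_lt
      (sum_range_lt_of_doubling he (by omega))
  · rintro (_ | j) hj1 hj2
    · omega
    · exact ⟨(he j (by omega)).1, (he j (by omega)).2, sum_range_lt_of_doubling he (by omega)⟩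

/-- Combinatorial lemma (case n > m): with t = ⌊(km−n)/m⌋, a = n − (k−t−2)m,
h = max{⌊a/2^{t+1}⌋, 1} > 1, any S ⊆ {1,…,m} with |S| ≥ m − h + 2 contains t+2 elements
s_0 < s_1 < ⋯ < s_{t+1} with s_0 + (2^{j−1} − 1)h + 1 ≤ s_j ≤ 2^{j−1}h and
s_j > s_0 + ⋯ + s_{j−1} for all 1 ≤ j ≤ t+1. -/
theorem exists_chain_of_large_subset (k m n t a h : ℕ) (hmn : m < n) (hkm : n ≤ k * m)
    (ht : t = (k * m - n) / m) (ha : a = n - (k - t - 2) * m)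
    (hh : h = max (a / 2 ^ (t + 1)) 1) (hh1 : 1 < h)
    (S : Finset ℕ) (hS : S ⊆ Finset.Icc 1 m) (hcard : m - h + 2 ≤ S.card) :
    ∃ e : ℕ → ℕ, (∀ i ≤ t + 1, e i ∈ S) ∧
      (∀ i j, i < j → j ≤ t + 1 → e i < e j) ∧
      (∀ j, 1 ≤ j → j ≤ t + 1 →
        e 0 + (2 ^ (j - 1) - 1) * h + 1 ≤ e j ∧ e j ≤ 2 ^ (j - 1) * h ∧
        (∑ i ∈ Finset.range j, e i) < e j) :=
  exists_chain_of_large_subset_general k m n t a h hkm ht ha hh hh1 S hS hcard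
end

section
/- Let q be a prime power, F_q ⊆ F_{q^m} a degree-m extension of finite fields, and ℓ ≥ 1. Let W be an F_q-subspace of F_{q^m}² with dim_{F_q}(W) = 2ℓ. Assume there exist three nonzero elements y₁, y₂, y₃ ∈ W such that no two of them are F_{q^m}-proportional (i.e., the F_{q^m}-lines ⟨y₁⟩_{F_{q^m}}, ⟨y₂⟩_{F_{q^m}}, ⟨y₃⟩_{F_{q^m}} are pairwise distinct) and dim_{F_q}(W ∩ ⟨y_i⟩_{F_{q^m}}) = ℓ for i = 1, 2, 3. Then there exist an invertible F_{q^m}-linear map A : F_{q^m}² → F_{q^m}² and an F_q-subspace S of F_{q^m} with dim_{F_q}(S) = ℓ such that the image of W under A equals S × S. -/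
/-!
Write `y₂ = a y₀ + b y₁` and rescale: `z₀ = a y₀`, `z₁ = b y₁` span the same lines and
`y₂ = z₀ + z₁`. The intersections of `W` with the lines `L z₀` and `L z₁` meet trivially and their
dimensions add up to `dim W`, so `W` is their direct sum; in the coordinates of the basis
`(z₀, z₁)` it becomes `S₀ × S₁` with `Sᵢ = {c | c zᵢ ∈ W}`. Then `{c | c (z₀ + z₁) ∈ W} = S₀ ∩ S₁`,
and since all three have dimension `ℓ`, `S₀ = S₁ = S₀ ∩ S₁`.
-/

open Module Submodule

section

variable {K L V : Type*} [Field K] [Field L] [Algebra K L] [AddCommGroup V] [Module L V]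
  [Module K V] [IsScalarTower K L V]

variable (L) in
def lineCoeffs (W : Submodule K V) (z : V) : Submodule K L :=
  W.comap ((LinearMap.toSpanSingleton L V z).restrictScalars K)

@[simp]
lemma mem_lineCoeffs {W : Submodule K V} {z : V} {c : L} :
    c ∈ lineCoeffs L W z ↔ c • z ∈ W :=
  Iff.rfl

lemma finrank_lineCoeffs (W : Submodule K V) {z : V} (hz : z ≠ 0) :
    finrank K (lineCoeffs L W z) = finrank K ↥(W ⊓ (span L {z}).restrictScalars K) := by
  set f := (LinearMap.toSpanSingleton L V z).restrictScalars K
  have hf : Function.Injective f := smul_left_injective L hz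
  rw [(equivMapOfInjective f hf _).finrank_eq, lineCoeffs, map_comap_eq,
    LinearMap.range_restrictScalars, ← LinearMap.span_singleton_eq_range, inf_comm]

lemma inf_restrictScalars_span_pair_eq_bot {W : Submodule K V} {z₀ z₁ : V}
    (hli : LinearIndependent L ![z₀, z₁]) :
    (W ⊓ (span L {z₀}).restrictScalars K) ⊓ (W ⊓ (span L {z₁}).restrictScalars K) = ⊥ := by
  rw [eq_bot_iff]
  rintro x ⟨⟨-, hx₀⟩, -, hx₁⟩
  obtain ⟨c, rfl⟩ := mem_span_singleton.1 hx₀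
  obtain ⟨d, hd⟩ := mem_span_singleton.1 hx₁
  have hc : c = 0 := (hli.eq_of_pair (t := 0) (s' := 0) (by simpa using hd.symm)).1
  simp [hc]

lemma inf_restrictScalars_span_sup_eq {W : Submodule K V} [FiniteDimensional K W] {z₀ z₁ : V}
    (hli : LinearIndependent L ![z₀, z₁])
    (hW : finrank K W = finrank K ↥(W ⊓ (span L {z₀}).restrictScalars K) +
      finrank K ↥(W ⊓ (span L {z₁}).restrictScalars K)) :
    (W ⊓ (span L {z₀}).restrictScalars K) ⊔ (W ⊓ (span L {z₁}).restrictScalars K) = W := by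
  refine eq_of_le_of_finrank_le (sup_le inf_le_left inf_le_left) ?_
  have := finrank_sup_add_finrank_inf_eq (W ⊓ (span L {z₀}).restrictScalars K)
    (W ⊓ (span L {z₁}).restrictScalars K)
  rw [inf_restrictScalars_span_pair_eq_bot hli, finrank_bot, add_zero] at this
  omega

lemma smul_add_smul_mem_iff {W : Submodule K V} [FiniteDimensional K W] {z₀ z₁ : V}
    (hli : LinearIndependent L ![z₀, z₁])
    (hW : finrank K W = finrank K ↥(W ⊓ (span L {z₀}).restrictScalars K) +
      finrank K ↥(W ⊓ (span L {z₁}).restrictScalars K)) (u t : L) :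
    u • z₀ + t • z₁ ∈ W ↔ u • z₀ ∈ W ∧ t • z₁ ∈ W := by
  refine ⟨fun h => ?_, fun ⟨h₀, h₁⟩ => W.add_mem h₀ h₁⟩
  rw [← inf_restrictScalars_span_sup_eq hli hW] at h
  obtain ⟨p, ⟨hpW, hp⟩, r, ⟨hrW, hr⟩, hpr⟩ := mem_sup.1 h
  obtain ⟨c, rfl⟩ := mem_span_singleton.1 hp
  obtain ⟨d, rfl⟩ := mem_span_singleton.1 hr
  obtain ⟨rfl, rfl⟩ := hli.eq_of_pair hpr
  exact ⟨hpW, hrW⟩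

lemma lineCoeffs_add_eq_inf {W : Submodule K V} {z₀ z₁ : V}
    (hsplit : ∀ u t : L, u • z₀ + t • z₁ ∈ W ↔ u • z₀ ∈ W ∧ t • z₁ ∈ W) :
    lineCoeffs L W (z₀ + z₁) = lineCoeffs L W z₀ ⊓ lineCoeffs L W z₁ := by
  ext c
  simp [smul_add, hsplit]

lemma lineCoeffs_eq_of_finrank_eq {W : Submodule K V} {z₀ z₁ : V}
    [FiniteDimensional K (lineCoeffs L W z₀)] [FiniteDimensional K (lineCoeffs L W z₁)]
    (hsplit : ∀ u t : L, u • z₀ + t • z₁ ∈ W ↔ u • z₀ ∈ W ∧ t • z₁ ∈ W)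
    (h₀ : finrank K (lineCoeffs L W z₀) = finrank K (lineCoeffs L W (z₀ + z₁)))
    (h₁ : finrank K (lineCoeffs L W z₁) = finrank K (lineCoeffs L W (z₀ + z₁))) :
    lineCoeffs L W z₀ = lineCoeffs L W (z₀ + z₁) ∧
      lineCoeffs L W z₁ = lineCoeffs L W (z₀ + z₁) := by
  rw [lineCoeffs_add_eq_inf hsplit] at h₀ h₁ ⊢
  exact ⟨(eq_of_le_of_finrank_eq inf_le_left h₀.symm).symm,
    (eq_of_le_of_finrank_eq inf_le_right h₁.symm).symm⟩

lemma span_singleton_eq_of_smul_eq {c : L} {u v : V} (hu : u ≠ 0) (h : c • v = u) :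
    span L {v} = span L {u} :=
  span_singleton_eq_span_singleton.2 ⟨Units.mk0 c (by rintro rfl; simp_all [eq_comm]), h⟩

lemma linearIndependent_pair_of_span_ne {z₀ z₁ : V} (h₀ : z₀ ≠ 0) (h₁ : z₁ ≠ 0)
    (h : span L {z₀} ≠ span L {z₁}) : LinearIndependent L ![z₀, z₁] :=
  linearIndependent_fin2.2 ⟨h₁, fun _ hc => h (span_singleton_eq_of_smul_eq h₀ hc).symm⟩

lemma exists_units_smul_add_smul_eq (hV : finrank L V = 2) {y₀ y₁ y₂ : V} (h₀ : y₀ ≠ 0)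
    (h₁ : y₁ ≠ 0) (h₂ : y₂ ≠ 0) (h₀₁ : span L {y₀} ≠ span L {y₁})
    (h₂₀ : span L {y₂} ≠ span L {y₀}) (h₂₁ : span L {y₂} ≠ span L {y₁}) :
    ∃ a b : Lˣ, a • y₀ + b • y₁ = y₂ := by
  have hspan : span L (Set.range ![y₀, y₁]) = ⊤ :=
    (linearIndependent_pair_of_span_ne h₀ h₁ h₀₁).span_eq_top_of_card_eq_finrank (by simp [hV])
  obtain ⟨a, b, hab⟩ := mem_span_pair.1
    (by rw [← Matrix.range_cons_cons_empty y₀ y₁ ![], hspan]; trivial)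
  have ha : a ≠ 0 := by
    rintro rfl
    exact h₂₁ (span_singleton_eq_of_smul_eq h₂ (by simpa using hab)).symm
  have hb : b ≠ 0 := by
    rintro rfl
    exact h₂₀ (span_singleton_eq_of_smul_eq h₂ (by simpa using hab)).symm
  exact ⟨Units.mk0 a ha, Units.mk0 b hb, hab⟩

lemma exists_linearEquiv_image_eq (hV : finrank L V = 2) {W : Submodule K V} {z₀ z₁ : V}
    (hli : LinearIndependent L ![z₀, z₁])
    (hsplit : ∀ u t : L, u • z₀ + t • z₁ ∈ W ↔ u • z₀ ∈ W ∧ t • z₁ ∈ W) :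
    ∃ A : V ≃ₗ[L] (Fin 2 → L),
      A '' W = {v | v 0 ∈ lineCoeffs L W z₀ ∧ v 1 ∈ lineCoeffs L W z₁} := by
  let B := basisOfLinearIndependentOfCardEqFinrank hli (by simp [hV])
  refine ⟨B.equivFun, ?_⟩
  ext v
  simp [LinearEquiv.image_eq_preimage_symm, B, Fin.sum_univ_two, hsplit]

end

theorem subspace_equiv_prod_general (ℓ : ℕ) (hℓ : 1 ≤ ℓ)
    (K L : Type) [Field K] [Field L] [Algebra K L]
    (W : Submodule K (Fin 2 → L)) (hW : Module.finrank K W = 2 * ℓ)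
    (y : Fin 3 → (Fin 2 → L)) (hy0 : ∀ i, y i ≠ 0)
    (hdist : ∀ i j, i ≠ j →
      (Submodule.span L {y i} : Submodule L (Fin 2 → L)) ≠ Submodule.span L {y j})
    (hint : ∀ i, Module.finrank K
      (W ⊓ (Submodule.span L {y i}).restrictScalars K : Submodule K (Fin 2 → L)) = ℓ) :
    ∃ (A : (Fin 2 → L) ≃ₗ[L] (Fin 2 → L)) (S : Submodule K L),
      Module.finrank K S = ℓ ∧
      (⇑A '' (W : Set (Fin 2 → L)) = {v : Fin 2 → L | v 0 ∈ S ∧ v 1 ∈ S}) := by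
  have hV : finrank L (Fin 2 → L) = 2 := by simp
  obtain ⟨a, b, hab⟩ := exists_units_smul_add_smul_eq hV (hy0 0) (hy0 1) (hy0 2)
    (hdist 0 1 (by decide)) (hdist 2 0 (by decide)) (hdist 2 1 (by decide))
  have hspan₀ : span L {a • y 0} = span L {y 0} := span_singleton_group_smul_eq L a (y 0)
  have hspan₁ : span L {b • y 1} = span L {y 1} := span_singleton_group_smul_eq L b (y 1)
  have hz₀ : a • y 0 ≠ 0 := (smul_ne_zero_iff_ne a).2 (hy0 0)
  have hz₁ : b • y 1 ≠ 0 := (smul_ne_zero_iff_ne b).2 (hy0 1)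
  have hli : LinearIndependent L ![a • y 0, b • y 1] :=
    linearIndependent_pair_of_span_ne hz₀ hz₁
      (by rw [hspan₀, hspan₁]; exact hdist 0 1 (by decide))
  have : FiniteDimensional K W := .of_finrank_pos (by omega)
  have hsplit := smul_add_smul_mem_iff (W := W) hli
    (by rw [hspan₀, hspan₁, hint 0, hint 1, hW, two_mul])
  have hS : finrank K (lineCoeffs L W (y 2)) = ℓ :=
    (finrank_lineCoeffs W (hy0 2)).trans (hint 2)
  have hS₀ : finrank K (lineCoeffs L W (a • y 0)) = ℓ := by
    rw [finrank_lineCoeffs W hz₀, hspan₀, hint 0]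
  have hS₁ : finrank K (lineCoeffs L W (b • y 1)) = ℓ := by
    rw [finrank_lineCoeffs W hz₁, hspan₁, hint 1]
  have : FiniteDimensional K (lineCoeffs L W (a • y 0)) := .of_finrank_pos (by omega)
  have : FiniteDimensional K (lineCoeffs L W (b • y 1)) := .of_finrank_pos (by omega)
  obtain ⟨hS_eq₀, hS_eq₁⟩ := lineCoeffs_eq_of_finrank_eq hsplit (by rw [hS₀, hab, hS])
    (by rw [hS₁, hab, hS])
  obtain ⟨A, hA⟩ := exists_linearEquiv_image_eq hV hli hsplit
  exact ⟨A, lineCoeffs L W (y 2), hS, by rw [hA, hS_eq₀, hS_eq₁, hab]⟩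

/-- If W is an F_q-subspace of F_{q^m}² of dimension 2ℓ containing three pairwise
non-proportional nonzero vectors y₁, y₂, y₃ with dim_{F_q}(W ∩ ⟨y_i⟩_{F_{q^m}}) = ℓ, then W is
GL(2,q^m)-equivalent to S × S for some F_q-subspace S of F_{q^m} with dim_{F_q} S = ℓ. -/
theorem subspace_equiv_prod (q m ℓ : ℕ) (hq : IsPrimePow q) (hℓ : 1 ≤ ℓ)
    (K L : Type) [Field K] [Fintype K] [Field L] [Algebra K L]
    (hcard : Fintype.card K = q) (hdeg : Module.finrank K L = m)
    (W : Submodule K (Fin 2 → L)) (hW : Module.finrank K W = 2 * ℓ)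
    (y : Fin 3 → (Fin 2 → L)) (hy0 : ∀ i, y i ≠ 0) (hymem : ∀ i, y i ∈ W)
    (hdist : ∀ i j, i ≠ j →
      (Submodule.span L {y i} : Submodule L (Fin 2 → L)) ≠ Submodule.span L {y j})
    (hint : ∀ i, Module.finrank K
      (W ⊓ (Submodule.span L {y i}).restrictScalars K : Submodule K (Fin 2 → L)) = ℓ) :
    ∃ (A : (Fin 2 → L) ≃ₗ[L] (Fin 2 → L)) (S : Submodule K L),
      Module.finrank K S = ℓ ∧
      (⇑A '' (W : Set (Fin 2 → L)) = {v : Fin 2 → L | v 0 ∈ S ∧ v 1 ∈ S}) :=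
  subspace_equiv_prod_general ℓ hℓ K L W hW y hy0 hdist hint
end

section
/- Let q be a prime power and let k, n, m be integers with 1 < k < n, m < n ≤ km, and assume m ≥ 4, or m = 3 and n ≥ 5. Set t = ⌊(km − n)/m⌋, a = n − (k − t − 2)m, and h = max{⌊a/2^{t+1}⌋, 1}. Let C be a nondegenerate [n,k]_{q^m/q} rank-metric code with |WS(C)| = m − h + 1 (i.e., C is L_rk-optimal). Then the dual code C⊥ is degenerate, or else n ≤ (n−k)m and |WS(C⊥)| ≠ m − h⊥ + 1, where t⊥ = ⌊((n−k)m − n)/m⌋, a⊥ = n − ((n−k) − t⊥ − 2)m, and h⊥ = max{⌊a⊥/2^{t⊥+1}⌋, 1}; in other words, C⊥ is degenerate or not L_rk-optimal. -/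
/-!
A codeword `x • λ` of rank weight one (`x ∈ K^n`) is orthogonal to `d` exactly when
`∑ j, x j • d j = 0`, so a code with a weight-one codeword has a degenerate dual. If `h = 1`, the
spectrum of `C` is all of `{1, …, m}`, hence contains `1`, and `C⊥` is degenerate. If `h ≥ 2`,
i.e. `a ≥ 2^(t+2)`, then `C⊥` has the same `a` but a much larger `t⊥ = n - k - ⌈n/m⌉`, which
forces `h⊥ = 1`; an `L_rk`-optimal `C⊥` would need all `m` weights, yet the nondegeneracy of `C`
rules out weight one in `C⊥`.
-/

section RankWeight

variable {K L : Type*} [Field K] [Field L] [Algebra K L] {n : ℕ}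

theorem rankWeight_eq_zero_iff {v : Fin n → L} : rankWeight K v = 0 ↔ v = 0 := by
  have := FiniteDimensional.span_of_finite K (Set.finite_range v)
  rw [rankWeight, Submodule.finrank_eq_zero, Submodule.span_eq_bot, Set.forall_mem_range,
    funext_iff]
  rfl

theorem rankWeight_le_finrank [FiniteDimensional K L] (v : Fin n → L) :
    rankWeight K v ≤ Module.finrank K L :=
  Submodule.finrank_le _

theorem exists_eq_smul_of_rankWeight_eq_one {v : Fin n → L} (hv : rankWeight K v = 1) :
    ∃ (x : Fin n → K) (lam : L), x ≠ 0 ∧ lam ≠ 0 ∧ ∀ j, v j = x j • lam := by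
  obtain ⟨w, hw0, hw⟩ := finrank_eq_one_iff'.mp hv
  choose x hx using fun j => hw ⟨v j, Submodule.subset_span (Set.mem_range_self j)⟩
  have hrep : ∀ j, v j = x j • (w : L) := fun j => (congrArg Subtype.val (hx j)).symm
  refine ⟨x, w, ?_, by simpa using hw0, hrep⟩
  rintro rfl
  have : v = 0 := funext fun j => by simp [hrep j]
  simp [rankWeight_eq_zero_iff.mpr this] at hv

theorem not_isNondegenerate_of_rankWeight_eq_one {D : Submodule L (Fin n → L)} {c : Fin n → L}
    (hc : rankWeight K c = 1) (horth : ∀ d ∈ D, ∑ j, c j * d j = 0) :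
    ¬ IsNondegenerate K D := by
  obtain ⟨x, lam, hx, hlam, hrep⟩ := exists_eq_smul_of_rankWeight_eq_one hc
  intro hD
  obtain ⟨d, hd, hne⟩ := hD x hx
  have hpair : ∑ j, c j * d j = lam * ∑ j, x j • d j := by
    simp only [hrep, Finset.mul_sum, smul_mul_assoc, mul_smul_comm]
  exact hne ((mul_eq_zero.mp (hpair ▸ horth d hd)).resolve_left hlam)

theorem not_isNondegenerate_of_one_mem_weightSpectrum {C D : Submodule L (Fin n → L)}
    (h1 : 1 ∈ weightSpectrum K C) (horth : ∀ c ∈ C, ∀ d ∈ D, ∑ j, c j * d j = 0) :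
    ¬ IsNondegenerate K D := by
  obtain ⟨c, hc, -, hc1⟩ := h1
  exact not_isNondegenerate_of_rankWeight_eq_one hc1 (horth c hc)

theorem ncard_weightSpectrum_lt_finrank [FiniteDimensional K L] {C : Submodule L (Fin n → L)}
    (h1 : 1 ∉ weightSpectrum K C) : (weightSpectrum K C).ncard < Module.finrank K L := by
  have hsub : weightSpectrum K C ⊆ Set.Icc 2 (Module.finrank K L) := by
    rintro _ ⟨c, hc, hc0, rfl⟩
    have hpos : rankWeight K c ≠ 0 := mt rankWeight_eq_zero_iff.mp hc0
    have hne1 : rankWeight K c ≠ 1 := fun h => h1 ⟨c, hc, hc0, h⟩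
    exact ⟨by omega, rankWeight_le_finrank c⟩
  have hle := Set.ncard_le_ncard hsub (Set.finite_Icc _ _)
  rw [← Finset.coe_Icc, Set.ncard_coe_finset, Nat.card_Icc] at hle
  have := Module.finrank_pos (R := K) (M := L)
  omega

end RankWeight

theorem Nat.mul_self_lt_two_pow {a : ℕ} (ha : 5 ≤ a) : a * a < 2 ^ a := by
  induction a, ha using Nat.le_induction with
  | base => norm_num
  | succ a ha ih => rw [pow_succ]; nlinarith

theorem Nat.lt_two_pow_sub_of_two_pow_le {a j : ℕ} (ha : 5 ≤ a) (hj : 2 ^ j ≤ a) :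
    a < 2 ^ (a - j) := by
  have hja : j ≤ a := (Nat.lt_two_pow_self.trans_le hj).le
  have : a * 2 ^ j < 2 ^ (a - j) * 2 ^ j := by
    calc a * 2 ^ j ≤ a * a := Nat.mul_le_mul_left a hj
      _ < 2 ^ a := Nat.mul_self_lt_two_pow ha
      _ = 2 ^ (a - j) * 2 ^ j := by rw [← pow_add, Nat.sub_add_cancel hja]
  exact Nat.lt_of_mul_lt_mul_right this

theorem Nat.exists_le_mul_lt_add {m : ℕ} (hm : 0 < m) (n : ℕ) :
    ∃ s, n ≤ s * m ∧ s * m < n + m := by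
  refine ⟨(n + m - 1) / m, ?_, ?_⟩
  all_goals
    have := Nat.div_add_mod' (n + m - 1) m
    have := Nat.mod_lt (n + m - 1) hm
    omega

-- The parameters `t`, `a`, `h` of an `[n,k]_{q^m/q}` code; `L_rk`-optimal means `m - h + 1`
-- weights.
def lrkT (m n k : ℕ) : ℕ := (k * m - n) / m

def lrkA (m n k : ℕ) : ℕ := n - (k - lrkT m n k - 2) * m

def lrkH (m n k : ℕ) : ℕ := max (lrkA m n k / 2 ^ (lrkT m n k + 1)) 1

theorem lrkH_eq_one_iff {m n k : ℕ} : lrkH m n k = 1 ↔ lrkA m n k < 2 ^ (lrkT m n k + 2) := by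
  rw [lrkH, max_eq_right_iff, ← Nat.lt_add_one_iff, Nat.div_lt_iff_lt_mul (by positivity),
    pow_succ 2 (_ + 1), mul_comm]

/-- For `s = ⌈n/m⌉`, `t = k - s` and `a = n - (s - 2)m`: so `C` and `C⊥` share the same `a`. -/
theorem lrkT_eq_sub {m n k s : ℕ} (hn : n ≤ s * m) (hs : s * m < n + m) (hsk : s ≤ k) :
    lrkT m n k = k - s := by
  have hkm : k * m = (k - s) * m + s * m := by rw [← Nat.add_mul, Nat.sub_add_cancel hsk]
  exact Nat.div_eq_of_lt_le (by omega) (by rw [Nat.add_mul]; omega)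

theorem lrkA_eq_sub {m n k s : ℕ} (hn : n ≤ s * m) (hs : s * m < n + m) (hsk : s ≤ k) :
    lrkA m n k = n - (s - 2) * m := by
  rw [lrkA, lrkT_eq_sub hn hs hsk, Nat.sub_sub_self hsk]

theorem lrkH_sub_eq_one {m n k : ℕ} (hm : 4 ≤ m ∨ (m = 3 ∧ 5 ≤ n)) (hmn : m < n)
    (hkm : n ≤ k * m) (hH : lrkH m n k ≠ 1) : n ≤ (n - k) * m ∧ lrkH m n (n - k) = 1 := by
  have hm3 : 3 ≤ m := by omega
  obtain ⟨s, hn, hs⟩ := Nat.exists_le_mul_lt_add (by omega : 0 < m) n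
  have hsk : s ≤ k := Nat.le_of_lt_succ <| Nat.lt_of_mul_lt_mul_right (a := m) <| by
    rw [Nat.succ_mul]; omega
  have hs2 : 2 ≤ s := Nat.lt_of_mul_lt_mul_right (a := m) (by omega)
  rw [ne_eq, lrkH_eq_one_iff, lrkA_eq_sub hn hs hsk, lrkT_eq_sub hn hs hsk, not_lt] at hH
  set a := n - (s - 2) * m
  set t := k - s
  have hsm : s * m = (s - 2) * m + 2 * m := by rw [← Nat.add_mul, Nat.sub_add_cancel hs2]
  have hsm3 : (s - 2) * 3 ≤ (s - 2) * m := Nat.mul_le_mul_left _ hm3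
  have hma : m < a := by omega
  have ht4 : t + 4 ≤ 2 ^ (t + 2) := by
    have := Nat.lt_two_pow_self (n := t)
    rw [pow_add]
    omega
  have hsnk : s ≤ n - k := by omega
  refine ⟨hn.trans (Nat.mul_le_mul_right m hsnk), ?_⟩
  rw [lrkH_eq_one_iff, lrkA_eq_sub hn hs hsnk, lrkT_eq_sub hn hs hsnk]
  rcases Nat.lt_or_ge a 5 with ha5 | ha5
  · -- the only small case is `a = 4`, `t = 0`, `m = 3`, where `n ≥ 5` forces `s ≥ 3`
    obtain rfl : m = 3 := by omega
    calc a < 2 ^ 3 := by omega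
      _ ≤ 2 ^ (n - k - s + 2) := Nat.pow_le_pow_right two_pos (by omega)
  · calc a < 2 ^ (a - (t + 2)) := Nat.lt_two_pow_sub_of_two_pow_le ha5 hH
      _ ≤ 2 ^ (n - k - s + 2) := Nat.pow_le_pow_right two_pos (by omega)

theorem dual_not_Lrk_optimal_of_gt_general (m n k t a h : ℕ)
    (hmn : m < n) (hkm : n ≤ k * m)
    (hm : 4 ≤ m ∨ (m = 3 ∧ 5 ≤ n))
    (ht : t = (k * m - n) / m) (ha : a = n - (k - t - 2) * m)
    (hh : h = max (a / 2 ^ (t + 1)) 1)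
    (K L : Type) [Field K] [Field L] [Algebra K L]
    (hdeg : Module.finrank K L = m)
    (C D : Submodule L (Fin n → L))
    (hnd : IsNondegenerate K C)
    (hD : ∀ d : Fin n → L, d ∈ D ↔ ∀ c ∈ C, (∑ j, c j * d j) = 0)
    (hopt : (weightSpectrum K C).ncard = m - h + 1) :
    ¬ IsNondegenerate K D ∨
      (n ≤ (n - k) * m ∧
        (weightSpectrum K D).ncard ≠
          m - max ((n - ((n - k) - ((n - k) * m - n) / m - 2) * m) /
            2 ^ (((n - k) * m - n) / m + 1)) 1 + 1) := by
  have : FiniteDimensional K L := Module.finite_of_finrank_pos (by omega)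
  have horth : ∀ c ∈ C, ∀ d ∈ D, ∑ j, c j * d j = 0 := fun c hc d hd => (hD d).1 hd c hc
  have hH : h = lrkH m n k := by subst ht ha hh; rfl
  by_cases h1 : lrkH m n k = 1
  · left
    refine not_isNondegenerate_of_one_mem_weightSpectrum (by_contra fun h1C => ?_) horth
    have := ncard_weightSpectrum_lt_finrank h1C
    omega
  · right
    obtain ⟨hdual, hH_dual⟩ := lrkH_sub_eq_one hm hmn hkm h1
    refine ⟨hdual, ?_⟩
    change _ ≠ m - lrkH m n (n - k) + 1
    have hD1 : 1 ∉ weightSpectrum K D := fun h1D =>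
      not_isNondegenerate_of_one_mem_weightSpectrum h1D
        (fun d hd c hc => by rw [← horth c hc d hd]; simp only [mul_comm]) hnd
    have := ncard_weightSpectrum_lt_finrank hD1
    omega

/-- Duality, case n > m (with m ≥ 4, or m = 3 and n ≥ 5): if C is a nondegenerate
L_rk-optimal [n,k]_{q^m/q} code, then its dual code D = C⊥ is degenerate, or else
n ≤ (n−k)m and D is not L_rk-optimal. -/
theorem dual_not_Lrk_optimal_of_gt (q m n k t a h : ℕ) (hq : IsPrimePow q)
    (hk : 1 < k) (hkn : k < n) (hmn : m < n) (hkm : n ≤ k * m)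
    (hm : 4 ≤ m ∨ (m = 3 ∧ 5 ≤ n))
    (ht : t = (k * m - n) / m) (ha : a = n - (k - t - 2) * m)
    (hh : h = max (a / 2 ^ (t + 1)) 1)
    (K L : Type) [Field K] [Fintype K] [Field L] [Algebra K L]
    (hcard : Fintype.card K = q) (hdeg : Module.finrank K L = m)
    (C D : Submodule L (Fin n → L))
    (hdim : Module.finrank L C = k) (hnd : IsNondegenerate K C)
    (hD : ∀ d : Fin n → L, d ∈ D ↔ ∀ c ∈ C, (∑ j, c j * d j) = 0)
    (hopt : (weightSpectrum K C).ncard = m - h + 1) :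
    ¬ IsNondegenerate K D ∨
      (n ≤ (n - k) * m ∧
        (weightSpectrum K D).ncard ≠
          m - max ((n - ((n - k) - ((n - k) * m - n) / m - 2) * m) /
            2 ^ (((n - k) * m - n) / m + 1)) 1 + 1) :=
  dual_not_Lrk_optimal_of_gt_general m n k t a h hmn hkm hm ht ha hh K L hdeg C D hnd hD hopt
end
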